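/- The common zero locus in ℂ³ of the nine polynomials p1, p2, p3, p4, p5, p6, p7, p8, p9 defined in the context, i.e. the set {(a,b,c) ∈ ℂ³ : pi(a,b,c) = 0 for all i = 1,…,9}, is exactly the following set of thirteen points: {(0,0,0), (1,0,0), (-2,0,0), (-3,0,0), (0,-1,0), (0,0,-2), (1,-2,0), (0,-5/2,3), (0,-3/2,1), (-1/2,-1/2,0), (-3/2,0,0), (-1/2,0,0), (-3/2,1/2,0)}. -/
import Mathlib


/- Polynomials (as functions on ℂ³) attached to `V^{-2}(B₃)`: `pB1, pB2, pB3` are the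
Harish–Chandra projections attached to the conformal-weight-2 singular vector, and
`pB4, …, pB9` those attached to the weight-4ϖ₁ subsingular vector. -/

noncomputable def pB1 (h1 h2 h3 : ℂ) : ℂ := (2*h2 + h3)*(h1 + h2 + h3) + 2*(h2 + h3)

noncomputable def pB2 (h1 h2 h3 : ℂ) : ℂ := (h2 + h3)*(2*h1 + 2*h2 + h3 + 2)

noncomputable def pB3 (h1 h2 h3 : ℂ) : ℂ := h3*(h1 + 2*h2 + h3 + 2)

noncomputable def pB4 (h1 h2 h3 : ℂ) : ℂ :=
  -24*(16*h1^6 + 112*h2*h1^5 + 64*h3*h1^5 + 96*h1^5 + 320*h2^2*h1^4 + 104*h3^2*h1^4 + 496*h2*h1^4 + 368*h2*h3*h1^4 + 264*h3*h1^4 + 156*h1^4 + 480*h2^3*h1^3 + 88*h3^3*h1^3 + 984*h2^2*h1^3 + 472*h2*h3^2*h1^3 + 260*h3^2*h1^3 + 444*h2*h1^3 + 832*h2^2*h3*h1^3 + 1032*h2*h3*h1^3 + 156*h3*h1^3 - 16*h1^3 + 400*h2^4*h1^2 + 41*h3^4*h1^2 + 912*h2^3*h1^2 + 296*h2*h3^3*h1^2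 + 106*h3^3*h1^2 + 246*h2^2*h1^2 + 792*h2^2*h3^2*h1^2 + 696*h2*h3^2*h1^2 - 77*h3^2*h1^2 - 464*h2*h1^2 + 928*h2^3*h3*h1^2 + 1412*h2^2*h3*h1^2 + 12*h2*h3*h1^2 - 358*h3*h1^2 - 180*h1^2 + 176*h2^5*h1 + 10*h3^5*h1 + 376*h2^4*h1 + 91*h2*h3^4*h1 + 13*h3^4*h1 - 150*h2^3*h1 + 328*h2^2*h3^3*h1 + 154*h2*h3^3*h1 - 96*h3^3*h1 - 706*h2^2*h1 + 584*h2^3*h3^2*h1 + 542*h2^2*h3^2*h1 - 415*h2*h3^2*h1 - 269*h3^2*h1 - 476*h2*h1 + 512*h2^4*h3*h1 + 760*h2^3*h3*h1 - 488*h2^2*h3*h1 - 886*h2*h3*h1 - 306*h3*h1 - 72*h1 + 32*h2^6 + h3^6 + 48*h2^5 + 11*h2*h3^5 - h3^5 - 76*h2^4 + 50*h2^2*h3^4 + h2*h3^4 - 13*h3^4 - 72*h2^3 + 120*h2^3*h3^3 + 33*h2^2*h3^3 - 111*h2*h3^3 + 13*h3^3 + 44*h2^2 + 160*h2^4*h3^2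 + 100*h2^3*h3^2 - 265*h2^2*h3^2 - 27*h2*h3^2 + 36*h3^2 + 24*h2 + 112*h2^5*h3 + 116*h2^4*h3 - 244*h2^3*h3 - 110*h2^2*h3 + 54*h2*h3 - 36*h3)

noncomputable def pB5 (h1 h2 h3 : ℂ) : ℂ :=
  -2*(32*h1^6 + 204*h2*h1^5 + 128*h3*h1^5 + 192*h1^5 + 544*h2^2*h1^4 + 200*h3^2*h1^4 + 986*h2*h1^4 + 676*h2*h3*h1^4 + 536*h3*h1^4 + 312*h1^4 + 776*h2^3*h1^3 + 152*h3^3*h1^3 + 1934*h2^2*h1^3 + 839*h2*h3^2*h1^3 + 500*h3^2*h1^3 + 888*h2*h1^3 + 1432*h2^2*h3*h1^3 + 2077*h2*h3*h1^3 + 356*h3*h1^3 - 32*h1^3 + 624*h2^4*h1^2 + 56*h3^4*h1^2 + 1774*h2^3*h1^2 + 474*h2*h3^3*h1^2 + 160*h3^3*h1^2 + 592*h2^2*h1^2 + 1322*h2^2*h3^2*h1^2 + 1301*h2*h3^2*h1^2 - 156*h3^2*h1^2 - 814*h2*h1^2 + 1520*h2^3*h3*h1^2 + 2808*h2^2*h3*h1^2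 + 209*h2*h3*h1^2 - 636*h3*h1^2 - 360*h1^2 + 268*h2^5*h1 + 8*h3^5*h1 + 730*h2^4*h1 + 115*h2*h3^4*h1 + 4*h3^4*h1 - 120*h2^3*h1 + 493*h2^2*h3^3*h1 + 196*h2*h3^3*h1 - 200*h3^3*h1 - 1262*h2^2*h1 + 927*h2^3*h3^2*h1 + 974*h2^2*h3^2*h1 - 697*h2*h3^2*h1 - 580*h3^2*h1 - 824*h2*h1 + 808*h2^4*h3*h1 + 1497*h2^3*h3*h1 - 637*h2^2*h3*h1 - 1718*h2*h3*h1 - 528*h3*h1 - 144*h1 + 48*h2^6 + 96*h2^5 + 8*h2*h3^5 - 72*h2^4 + 59*h2^2*h3^4 - 14*h2*h3^4 - 144*h2^3 + 171*h2^3*h3^3 + 18*h2^2*h3^3 - 120*h2*h3^3 + 24*h2^2 + 244*h2^4*h3^2 + 167*h2^3*h3^2 - 319*h2^2*h3^2 - 118*h2*h3^2 + 48*h2 + 172*h2^5*h3 + 230*h2^4*h3 - 272*h2^3*h3 - 254*h2^2*h3 + 28*h2*h3)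

noncomputable def pB6 (h1 h2 h3 : ℂ) : ℂ :=
  -4*(16*h1^6 + 97*h2*h1^5 + 64*h3*h1^5 + 96*h1^5 + 246*h2^2*h1^4 + 96*h3^2*h1^4 + 462*h2*h1^4 + 323*h2*h3*h1^4 + 272*h3*h1^4 + 156*h1^4 + 334*h2^3*h1^3 + 64*h3^3*h1^3 + 860*h2^2*h1^3 + 387*h2*h3^2*h1^3 + 240*h3^2*h1^3 + 477*h2*h1^3 + 654*h2^2*h3*h1^3 + 989*h2*h3*h1^3 + 200*h3*h1^3 - 16*h1^3 + 256*h2^4*h1^2 + 16*h3^4*h1^2 + 760*h2^3*h1^2 + 193*h2*h3^3*h1^2 + 48*h3^3*h1^2 + 402*h2^2*h1^2 + 586*h2^2*h3^2*h1^2 + 576*h2*h3^2*h1^2 - 68*h3^2*h1^2 - 312*h2*h1^2 + 664*h2^3*h3*h1^2 + 1268*h2^2*h3*h1^2 + 192*h2*h3*h1^2 - 284*h3*h1^2 - 180*h1^2 + 105*h2^5*h1 + 308*h2^4*h1 + 32*h2*h3^4*h1 - 16*h3^4*h1 + 43*h2^3*h1 + 194*h2^2*h3^3*h1 + 33*h2*h3^3*h1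 - 112*h3^3*h1 - 488*h2^2*h1 + 395*h2^3*h3^2*h1 + 393*h2^2*h3^2*h1 - 335*h2*h3^2*h1 - 268*h3^2*h1 - 400*h2*h1 + 338*h2^4*h3*h1 + 649*h2^3*h3*h1 - 203*h2^2*h3*h1 - 734*h2*h3*h1 - 252*h3*h1 - 72*h1 + 18*h2^6 + 42*h2^5 - 6*h2^4 + 16*h2^2*h3^4 - 16*h2*h3^4 - 42*h2^3 + 65*h2^3*h3^3 - 15*h2^2*h3^3 - 50*h2*h3^3 - 12*h2^2 + 100*h2^4*h3^2 + 57*h2^3*h3^2 - 119*h2^2*h3^2 - 38*h2*h3^2 + 69*h2^5*h3 + 98*h2^4*h3 - 77*h2^3*h3 - 86*h2^2*h3 - 4*h2*h3)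

noncomputable def pB7 (h1 h2 h3 : ℂ) : ℂ :=
  -2*h1*(h1 + 2*h2 + h3 + 2)*(32*h1^4 + 180*h2*h1^3 + 96*h3*h1^3 + 128*h1^3 + 372*h2^2*h1^2 + 104*h3^2*h1^2 + 422*h2*h1^2 + 392*h2*h3*h1^2 + 216*h3*h1^2 + 56*h1^2 + 332*h2^3*h1 + 48*h3^3*h1 + 332*h2^2*h1 + 273*h2*h3^2*h1 + 76*h3^2*h1 - 176*h2*h1 + 520*h2^2*h3*h1 + 341*h2*h3*h1 - 132*h3*h1 - 144*h1 + 108*h2^4 + 8*h3^4 - 26*h2^3 + 61*h2*h3^3 - 12*h3^3 - 512*h2^2 + 175*h2^2*h3^2 - 34*h2*h3^2 - 176*h3^2 - 402*h2 + 224*h2^3*h3 - 37*h2^2*h3 - 613*h2*h3 - 228*h3 - 72)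

noncomputable def pB8 (h1 h2 h3 : ℂ) : ℂ :=
  -2*h1*(h1 + 2*h2 + h3 + 2)*(16*h1^4 + 80*h2*h1^3 + 48*h3*h1^3 + 64*h1^3 + 148*h2^2*h1^2 + 48*h3^2*h1^2 + 217*h2*h1^2 + 176*h2*h3*h1^2 + 112*h3*h1^2 + 28*h1^2 + 120*h2^3*h1 + 16*h3^3*h1 + 188*h2^2*h1 + 112*h2*h3^2*h1 + 32*h3^2*h1 - 66*h2*h1 + 212*h2^2*h3*h1 + 171*h2*h3*h1 - 52*h3*h1 - 72*h1 + 36*h2^4 + 3*h2^3 + 16*h2*h3^3 - 16*h3^3 - 216*h2^2 + 64*h2^2*h3^2 - 46*h2*h3^2 - 80*h3^2 - 195*h2 + 84*h2^3*h3 - 31*h2^2*h3 - 261*h2*h3 - 108*h3 - 36)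

noncomputable def pB9 (h1 h2 h3 : ℂ) : ℂ :=
  -4*(h1 - 1)*h1*(h1 + 2*h2 + h3 + 2)*(h1 + 2*h2 + h3 + 3)*(16*h1^2 + 63*h2*h1 + 32*h3*h1 + 32*h1 + 63*h2^2 + 16*h3^2 + 63*h2 + 63*h2*h3 + 32*h3 + 12)

/-- The common zero locus in ℂ³ of the nine polynomials `pB1, …, pB9` is exactly the
thirteen points corresponding to the highest weights (in fundamental-weight coordinates
`a·ϖ₁ + b·ϖ₂ + c·ϖ₃`) of the irreducible `L_{-2}(B₃)`-modules from category 𝒪. -/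
theorem zero_locus_B3 :
    {z : ℂ × ℂ × ℂ | pB1 z.1 z.2.1 z.2.2 = 0 ∧ pB2 z.1 z.2.1 z.2.2 = 0 ∧
      pB3 z.1 z.2.1 z.2.2 = 0 ∧ pB4 z.1 z.2.1 z.2.2 = 0 ∧ pB5 z.1 z.2.1 z.2.2 = 0 ∧
      pB6 z.1 z.2.1 z.2.2 = 0 ∧ pB7 z.1 z.2.1 z.2.2 = 0 ∧ pB8 z.1 z.2.1 z.2.2 = 0 ∧
      pB9 z.1 z.2.1 z.2.2 = 0} =
    ({(0, 0, 0), (1, 0, 0), (-2, 0, 0), (-3, 0, 0), (0, -1, 0), (0, 0, -2), (1, -2, 0),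
      (0, -5/2, 3), (0, -3/2, 1), (-1/2, -1/2, 0), (-3/2, 0, 0), (-1/2, 0, 0),
      (-3/2, 1/2, 0)} : Set (ℂ × ℂ × ℂ)) := by
  ext ⟨a, b, c⟩
  simp only [Set.mem_setOf_eq, Set.mem_insert_iff, Set.mem_singleton_iff, Prod.mk.injEq,
    pB1, pB2, pB3, pB4, pB5, pB6, pB7, pB8, pB9]
  constructor
  · rintro ⟨h1, h2, h3, h4, h5, h6, h7, h8, h9⟩
    rcases mul_eq_zero.mp h3 with hc | hL
    · rcases mul_eq_zero.mp h2 with hbc | hM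
      · -- c = 0, b + c = 0  ⇒  b = c = 0
        have hb : b = 0 := by linear_combination hbc - hc
        subst hb; subst hc
        have key : a * (a - 1) * (a + 2) * (a + 3) * (2 * a + 1) * (2 * a + 3) = 0 := by
          linear_combination (-1/16 : ℂ) * h9
        rcases mul_eq_zero.mp key with key | h
        · rcases mul_eq_zero.mp key with key | h
          · rcases mul_eq_zero.mp key with key | h
            · rcases mul_eq_zero.mp key with key | h
              · rcases mul_eq_zero.mp key with h | h
                · subst h; norm_num
                · have : a = 1 := by linear_combination h
                  subst this; norm_num
              · have : a = -2 := by linear_combination h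
                subst this; norm_num
            · have : a = -3 := by linear_combination h
              subst this; norm_num
          · have : a = -1/2 := by linear_combination h / 2
            subst this; norm_num
        · have : a = -3/2 := by linear_combination h / 2
          subst this; norm_num
      · -- c = 0, 2a + 2b + c + 2 = 0  ⇒  a = -1 - b
        subst hc
        have ha : a = -1 - b := by linear_combination hM / 2
        subst ha
        have key : (b + 1) * (b + 1) * (b + 2) * (b + 2) * (2 * b - 1) * (2 * b + 1) = 0 := by
          linear_combination (-1/16 : ℂ) * h9
        rcases mul_eq_zero.mp key with key | h
        · rcases mul_eq_zero.mp key with key | h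
          · rcases mul_eq_zero.mp key with key | h
            · rcases mul_eq_zero.mp key with key | h
              · rcases mul_eq_zero.mp key with h | h
                · have : b = -1 := by linear_combination h
                  subst this; norm_num
                · have : b = -1 := by linear_combination h
                  subst this; norm_num
              · have : b = -2 := by linear_combination h
                subst this; norm_num
            · have : b = -2 := by linear_combination h
              subst this; norm_num
          · have : b = 1/2 := by linear_combination h / 2
            subst this; norm_num
        · have : b = -1/2 := by linear_combination h / 2
          subst this; norm_num
    · rcases mul_eq_zero.mp h2 with hbc | hM
      · -- a + 2b + c + 2 = 0, b + c = 0
        have hc : c = -b := by linear_combination hbc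
        subst hc
        have ha : a = -2 - b := by linear_combination hL
        subst ha
        have key : b * (b + 2) = 0 := by linear_combination -h1
        rcases mul_eq_zero.mp key with h | h
        · subst h; norm_num
        · have : b = -2 := by linear_combination h
          subst this
          exfalso
          norm_num at h4
      · -- a + 2b + c + 2 = 0, 2a + 2b + c + 2 = 0  ⇒  a = 0, c = -2 - 2b
        have ha : a = 0 := by linear_combination hM - hL
        subst ha
        have hc : c = -2 - 2 * b := by linear_combination hL
        subst hc
        have key : b * (b + 1) * (2 * b + 3) * (2 * b + 5) = 0 := by
          linear_combination (-1/192 : ℂ) * h4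
        rcases mul_eq_zero.mp key with key | h
        · rcases mul_eq_zero.mp key with key | h
          · rcases mul_eq_zero.mp key with h | h
            · subst h; norm_num
            · have : b = -1 := by linear_combination h
              subst this; norm_num
          · have : b = -3/2 := by linear_combination h / 2
            subst this; norm_num
        · have : b = -5/2 := by linear_combination h / 2
          subst this; norm_num
  · rintro (⟨rfl, rfl, rfl⟩ | ⟨rfl, rfl, rfl⟩ | ⟨rfl, rfl, rfl⟩ | ⟨rfl, rfl, rfl⟩ |
      ⟨rfl, rfl, rfl⟩ | ⟨rfl, rfl, rfl⟩ | ⟨rfl, rfl, rfl⟩ | ⟨rfl, rfl, rfl⟩ |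
      ⟨rfl, rfl, rfl⟩ | ⟨rfl, rfl, rfl⟩ | ⟨rfl, rfl, rfl⟩ | ⟨rfl, rfl, rfl⟩ |
      ⟨rfl, rfl, rfl⟩) <;> norm_num
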